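/- arXiv:1211.0044 — 2 statements merged into one kernel-verified Lean document; each statement's English description precedes it below -/
import Mathlib

section
/- Let F and G be non-constant analytic functions in a neighborhood of 0 with F(0) = G(0) = 0, with power series F(z) = a_m z^m + ⋯ and G(z) = b_n z^n + ⋯ where a_m b_n ≠ 0. If there exist sequences of positive reals u_k → 0⁺ and v_k → 0⁺ with F(u_k) = G(v_k) ≠ 0 for all k, then b_n / a_m > 0. -/
open Filter Metric

theorem leading_coeff_ratio_pos
    (F G F₁ G₁ : ℂ → ℂ) (r : ℝ) (hr : 0 < r)
    (m n : ℕ) (hm : 1 ≤ m) (hn : 1 ≤ n) (a b : ℂ) (hab : a * b ≠ 0)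
    (hF₁ : AnalyticOnNhd ℂ F₁ (ball 0 r)) (hG₁ : AnalyticOnNhd ℂ G₁ (ball 0 r))
    (hFa : F₁ 0 = a) (hGb : G₁ 0 = b)
    (hFfac : ∀ z ∈ ball (0:ℂ) r, F z = z ^ m * F₁ z)
    (hGfac : ∀ z ∈ ball (0:ℂ) r, G z = z ^ n * G₁ z)
    (u v : ℕ → ℝ) (hu : ∀ k, 0 < u k) (hv : ∀ k, 0 < v k)
    (hu0 : Tendsto u atTop (nhds 0)) (hv0 : Tendsto v atTop (nhds 0))
    (heq : ∀ k, F (u k) = G (v k)) (hne : ∀ k, F (u k) ≠ 0) :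
    ∃ c : ℝ, 0 < c ∧ b = (c : ℂ) * a := by
  have ha : a ≠ 0 := left_ne_zero_of_mul hab
  have hb : b ≠ 0 := right_ne_zero_of_mul hab
  have huC : Tendsto (fun k => (u k : ℂ)) atTop (nhds 0) := by
    have := (Complex.continuous_ofReal.tendsto 0).comp hu0
    simpa [Function.comp_def] using this
  have hvC : Tendsto (fun k => (v k : ℂ)) atTop (nhds 0) := by
    have := (Complex.continuous_ofReal.tendsto 0).comp hv0
    simpa [Function.comp_def] using this
  have hFlim : Tendsto (fun k => F₁ (u k)) atTop (nhds a) := by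
    have := ((hF₁ 0 (mem_ball_self hr)).continuousAt.tendsto).comp huC
    simpa [hFa, Function.comp_def] using this
  have hGlim : Tendsto (fun k => G₁ (v k)) atTop (nhds b) := by
    have := ((hG₁ 0 (mem_ball_self hr)).continuousAt.tendsto).comp hvC
    simpa [hGb, Function.comp_def] using this
  have hur : ∀ᶠ k in atTop, (u k : ℂ) ∈ ball (0:ℂ) r :=
    huC (ball_mem_nhds 0 hr)
  have hvr : ∀ᶠ k in atTop, (v k : ℂ) ∈ ball (0:ℂ) r :=
    hvC (ball_mem_nhds 0 hr)
  have hFne : ∀ᶠ k in atTop, F₁ (u k) ≠ 0 := hFlim.eventually_ne ha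
  have key : ∀ᶠ k in atTop, ((u k ^ m / v k ^ n : ℝ) : ℂ) = G₁ (v k) / F₁ (u k) := by
    filter_upwards [hur, hvr, hFne] with k h1 h2 h3
    have e := heq k
    rw [hFfac _ h1, hGfac _ h2] at e
    have hu' : ((u k : ℂ)) ≠ 0 := by exact_mod_cast (hu k).ne'
    have hv' : ((v k : ℂ)) ≠ 0 := by exact_mod_cast (hv k).ne'
    push_cast
    rw [div_eq_div_iff (pow_ne_zero n hv') h3]
    linear_combination e
  have hwlim : Tendsto (fun k => ((u k ^ m / v k ^ n : ℝ) : ℂ)) atTop (nhds (b / a)) :=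
    (hGlim.div hFlim ha).congr' (key.mono fun k hk => hk.symm)
  have hre : Tendsto (fun k => u k ^ m / v k ^ n) atTop (nhds ((b / a).re)) := by
    have := (Complex.continuous_re.tendsto _).comp hwlim
    simpa only [Function.comp_def, Complex.ofReal_re] using this
  have him : Tendsto (fun _ : ℕ => (0 : ℝ)) atTop (nhds ((b / a).im)) := by
    have := (Complex.continuous_im.tendsto _).comp hwlim
    simpa only [Function.comp_def, Complex.ofReal_im] using this
  have him0 : (b / a).im = 0 := (tendsto_nhds_unique tendsto_const_nhds him).symm
  have hpos : ∀ k, 0 < u k ^ m / v k ^ n := fun k =>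
    div_pos (pow_pos (hu k) m) (pow_pos (hv k) n)
  have hge : 0 ≤ (b / a).re := ge_of_tendsto' hre fun k => (hpos k).le
  have hba : (b / a) = (((b / a).re : ℝ) : ℂ) := by
    apply Complex.ext <;> simp [him0]
  have hrne : (b / a).re ≠ 0 := by
    intro h
    have : b / a = 0 := by rw [hba, h]; simp
    exact hb (by simpa [div_eq_zero_iff, ha] using this)
  refine ⟨(b / a).re, lt_of_le_of_ne hge (Ne.symm hrne), ?_⟩
  exact (div_eq_iff ha).mp hba
end

section
/- Let α < β be reals and F analytic in a complex neighborhood of [α,β], locally injective at every point of [α,β]. Then the set S := {(a,b) ∈ [α,β]² : a ≠ b and F(a) = F(b)} is compact. -/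
open Set Metric

theorem self_intersections_compact
    (α β : ℝ) (hαβ : α < β) (F : ℂ → ℂ) (U : Set ℂ) (hU : IsOpen U)
    (hsub : ∀ x ∈ Icc α β, (x : ℂ) ∈ U) (hF : AnalyticOnNhd ℂ F U)
    (hinj : ∀ a ∈ Icc α β, ∃ ε > (0:ℝ),
      Set.InjOn (fun t : ℝ => F t) (Ioo (a - ε) (a + ε))) :
    IsCompact {p : ℝ × ℝ | p.1 ∈ Icc α β ∧ p.2 ∈ Icc α β ∧ p.1 ≠ p.2 ∧
      F p.1 = F p.2} := by
  apply IsCompact.of_isClosed_subset (isCompact_Icc.prod isCompact_Icc)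
  · rw [← isSeqClosed_iff_isClosed]
    intro u p hu hup
    have h1 : Filter.Tendsto (fun n => (u n).1) Filter.atTop (nhds p.1) :=
      (continuous_fst.tendsto p).comp hup
    have h2 : Filter.Tendsto (fun n => (u n).2) Filter.atTop (nhds p.2) :=
      (continuous_snd.tendsto p).comp hup
    have hp1 : p.1 ∈ Icc α β :=
      isClosed_Icc.mem_of_tendsto h1 (Filter.Eventually.of_forall fun n => (hu n).1)
    have hp2 : p.2 ∈ Icc α β :=
      isClosed_Icc.mem_of_tendsto h2 (Filter.Eventually.of_forall fun n => (hu n).2.1)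
    have hcont : ∀ x ∈ Icc α β, ContinuousAt (fun t : ℝ => F t) x := fun x hx =>
      ((hF _ (hsub x hx)).continuousAt).comp Complex.continuous_ofReal.continuousAt
    have hF1 : Filter.Tendsto (fun n => F ((u n).1)) Filter.atTop (nhds (F p.1)) :=
      ((hcont p.1 hp1).tendsto).comp h1
    have hF2 : Filter.Tendsto (fun n => F ((u n).2)) Filter.atTop (nhds (F p.2)) :=
      ((hcont p.2 hp2).tendsto).comp h2
    have hFeq : F p.1 = F p.2 := by
      apply tendsto_nhds_unique hF1
      exact hF2.congr fun n => ((hu n).2.2.2).symm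
    refine ⟨hp1, hp2, ?_, hFeq⟩
    intro heq
    obtain ⟨ε, hε, hinjA⟩ := hinj p.1 hp1
    have hmem : ∀ᶠ n in Filter.atTop,
        (u n).1 ∈ Ioo (p.1 - ε) (p.1 + ε) ∧ (u n).2 ∈ Ioo (p.1 - ε) (p.1 + ε) := by
      have lo : p.1 - ε < p.1 := by linarith
      have hi : p.1 < p.1 + ε := by linarith
      have e1 := h1 (Ioo_mem_nhds lo hi)
      have e2 : Filter.Tendsto (fun n => (u n).2) Filter.atTop (nhds p.1) := heq ▸ h2
      exact (h1.eventually_mem (Ioo_mem_nhds lo hi)).and (e2.eventually_mem (Ioo_mem_nhds lo hi))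
    obtain ⟨n, hn1, hn2⟩ := hmem.exists
    exact (hu n).2.2.1 (hinjA hn1 hn2 (hu n).2.2.2)
  · rintro ⟨a, b⟩ ⟨ha, hb, -, -⟩
    exact ⟨ha, hb⟩
end
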